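/- arXiv:0710.1936 — 6 statements merged into one kernel-verified Lean document; each statement's English description precedes it below -/
import Mathlib

section
/- Let n > 1 be an integer and a ≥ 1 an integer. Then a is regular (mod n) if and only if gcd(a, n) = gcd(a², n). -/
-- An integer `a` is regular (mod `n`) if there is an integer `x`
-- with `a ^ 2 * x ≡ a (mod n)`.
def IsRegularMod (n a : ℤ) : Prop := ∃ x : ℤ, a ^ 2 * x ≡ a [ZMOD n]

-- `rho n` is the number of integers `a` with `1 ≤ a ≤ n` that are regular (mod `n`).
open Classical in
noncomputable def rho (n : ℕ) : ℕ :=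
  ((Finset.Icc 1 n).filter fun a : ℕ => IsRegularMod (n : ℤ) (a : ℤ)).card

/-! By Bézout, `a` is regular mod `n` exactly when `a` lies in the ideal `(a², n)`, i.e. when
`gcd(a², n) ∣ a`. As `gcd(a, n)` always divides `gcd(a², n)`, that divisibility is the same as
`gcd(a, n) = gcd(a², n)`. -/

theorem isRegularMod_iff_exists_eq_add (n a : ℤ) :
    IsRegularMod n a ↔ ∃ x y : ℤ, a = a ^ 2 * x + n * y := by
  simp only [IsRegularMod, Int.modEq_iff_dvd, dvd_def, sub_eq_iff_eq_add']

theorem isRegularMod_iff_gcd_dvd (n a : ℤ) :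
    IsRegularMod n a ↔ (Int.gcd (a ^ 2) n : ℤ) ∣ a := by
  rw [isRegularMod_iff_exists_eq_add, Int.coe_gcd, gcd_dvd_iff_exists]

theorem Nat.gcd_eq_gcd_iff_dvd_of_dvd {a b : ℕ} (n : ℕ) (hab : a ∣ b) :
    Nat.gcd a n = Nat.gcd b n ↔ Nat.gcd b n ∣ a := by
  refine ⟨fun h ↦ h ▸ Nat.gcd_dvd_left a n, fun h ↦ ?_⟩
  exact Nat.dvd_antisymm (Nat.gcd_dvd_gcd_of_dvd_left n hab)
    (Nat.dvd_gcd h (Nat.gcd_dvd_right b n))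

theorem regular_iff_gcd_eq_gcd_sq_general (n : ℕ) (a : ℕ) :
    IsRegularMod (n : ℤ) (a : ℤ) ↔ Nat.gcd a n = Nat.gcd (a ^ 2) n := by
  rw [isRegularMod_iff_gcd_dvd, Nat.gcd_eq_gcd_iff_dvd_of_dvd n (dvd_pow_self a two_ne_zero),
    ← Int.natCast_dvd_natCast, ← Nat.cast_pow, Int.gcd_natCast_natCast]

theorem regular_iff_gcd_eq_gcd_sq (n : ℕ) (hn : 1 < n) (a : ℕ) (ha : 1 ≤ a) :
    IsRegularMod (n : ℤ) (a : ℤ) ↔ Nat.gcd a n = Nat.gcd (a ^ 2) n :=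
  regular_iff_gcd_eq_gcd_sq_general n a
end

section
/- Let n > 1 be an integer and a ≥ 1 an integer. Then a is regular (mod n) if and only if a^{φ(n)+1} ≡ a (mod n), where φ is Euler's totient function. -/
section CommRing

variable {R : Type*} [CommRing R] {b : R}

theorem exists_unit_mul_idempotent_of_sq_mul_eq {y : R} (h : b ^ 2 * y = b) :
    ∃ u : Rˣ, ∃ e : R, IsIdempotentElem e ∧ b = u * e := by
  have he : IsIdempotentElem (b * y) := by
    rw [IsIdempotentElem]
    linear_combination y * h
  have huv : (b * (b * y) + (1 - b * y)) * (y * (b * y) + (1 - b * y)) = 1 := by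
    linear_combination (b * y ^ 2 - b * y - y ^ 2 + 2 * y) * h
  refine ⟨⟨_, _, huv, by rw [mul_comm, huv]⟩, b * y, he, ?_⟩
  linear_combination (-(b * y) + y - 1) * h

theorem pow_succ_eq_self_of_sq_mul_eq {m : ℕ} (hm : ∀ u : Rˣ, u ^ m = 1) {y : R}
    (h : b ^ 2 * y = b) : b ^ (m + 1) = b := by
  obtain ⟨u, e, he, rfl⟩ := exists_unit_mul_idempotent_of_sq_mul_eq h
  rw [mul_pow, he.pow_succ_eq, pow_succ, ← Units.val_pow_eq_pow_val, hm, Units.val_one, one_mul]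

theorem exists_sq_mul_eq_iff_pow_succ_eq {m : ℕ} (hm₀ : m ≠ 0) (hm : ∀ u : Rˣ, u ^ m = 1) :
    (∃ y, b ^ 2 * y = b) ↔ b ^ (m + 1) = b := by
  refine ⟨fun ⟨_, h⟩ => pow_succ_eq_self_of_sq_mul_eq hm h, fun h => ⟨b ^ (m - 1), ?_⟩⟩
  rwa [← pow_add, show 2 + (m - 1) = m + 1 by omega]

end CommRing

theorem isRegularMod_iff_exists_sq_mul_eq {n : ℕ} {a : ℤ} :
    IsRegularMod n a ↔ ∃ y : ZMod n, (a : ZMod n) ^ 2 * y = a := by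
  simp only [IsRegularMod, ← ZMod.intCast_eq_intCast_iff, Int.cast_mul, Int.cast_pow]
  exact (ZMod.intCast_surjective.exists (p := fun y : ZMod n => (a : ZMod n) ^ 2 * y = a)).symm

theorem regular_iff_pow_totient_succ_general (n : ℕ) (hn : 1 < n) (a : ℕ) :
    IsRegularMod (n : ℤ) (a : ℤ) ↔ a ^ (Nat.totient n + 1) ≡ a [MOD n] := by
  rw [isRegularMod_iff_exists_sq_mul_eq, ← ZMod.natCast_eq_natCast_iff]
  push_cast
  exact exists_sq_mul_eq_iff_pow_succ_eq (Nat.totient_pos.2 (by omega)).ne' ZMod.pow_totient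

theorem regular_iff_pow_totient_succ (n : ℕ) (hn : 1 < n) (a : ℕ) (ha : 1 ≤ a) :
    IsRegularMod (n : ℤ) (a : ℤ) ↔ a ^ (Nat.totient n + 1) ≡ a [MOD n] :=
  regular_iff_pow_totient_succ_general n hn a
end

section
/- The arithmetic function ϱ is multiplicative, and for every prime power p^ν with ν ≥ 1, ϱ(p^ν) = p^ν − p^{ν−1} + 1 = φ(p^ν) + 1. -/
/-!
Regularity of `a` (mod `n`) only depends on the residue of `a` in `ZMod n`, and `ρ(n)` counts the
von Neumann regular elements of that ring. By the Chinese remainder theorem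
`ZMod (m * n) ≃+* ZMod m × ZMod n` for coprime `m, n`, and regularity in a product is
componentwise, so `ρ` is multiplicative. The ring `ZMod (p ^ ν)` is local, and in a local ring
`a ^ 2 * x = a` forces either `a * x` to be a unit (so `a` is one) or `1 - a * x` to be a unit
(so `a = 0`): the regular elements are `0` and the `φ(p ^ ν)` units.
-/

-- In a commutative monoid this is von Neumann regularity `a * x * a = a`.
def IsVonNeumannRegular {M : Type*} [Monoid M] (a : M) : Prop := ∃ x, a ^ 2 * x = a

namespace IsVonNeumannRegular

section Monoid

variable {M N : Type*} [Monoid M] [Monoid N]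

theorem of_isUnit {a : M} (ha : IsUnit a) : IsVonNeumannRegular a := by
  obtain ⟨u, rfl⟩ := ha
  exact ⟨↑u⁻¹, by rw [sq, mul_assoc, Units.mul_inv, mul_one]⟩

theorem map_iff (e : M ≃* N) {a : M} : IsVonNeumannRegular (e a) ↔ IsVonNeumannRegular a := by
  constructor
  · rintro ⟨x, hx⟩
    exact ⟨e.symm x, e.injective (by rwa [map_mul, map_pow, e.apply_symm_apply])⟩
  · rintro ⟨x, hx⟩
    exact ⟨e x, by rw [← map_pow, ← map_mul, hx]⟩

theorem prod_iff {a : M × N} :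
    IsVonNeumannRegular a ↔ IsVonNeumannRegular a.1 ∧ IsVonNeumannRegular a.2 := by
  constructor
  · rintro ⟨x, hx⟩
    exact ⟨⟨x.1, congr_arg Prod.fst hx⟩, ⟨x.2, congr_arg Prod.snd hx⟩⟩
  · rintro ⟨⟨x, hx⟩, ⟨y, hy⟩⟩
    exact ⟨(x, y), Prod.ext hx hy⟩

end Monoid

theorem zero {M₀ : Type*} [MonoidWithZero M₀] : IsVonNeumannRegular (0 : M₀) :=
  ⟨0, by simp⟩

theorem iff_eq_zero_or_isUnit {R : Type*} [CommRing R] [IsLocalRing R] {a : R} :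
    IsVonNeumannRegular a ↔ a = 0 ∨ IsUnit a := by
  refine ⟨fun ⟨x, hx⟩ => ?_, fun h => h.elim (· ▸ zero) of_isUnit⟩
  rcases IsLocalRing.isUnit_or_isUnit_one_sub_self (a * x) with hax | hax
  · exact Or.inr (isUnit_of_mul_isUnit_left hax)
  · exact Or.inl (hax.mul_left_eq_zero.mp (by linear_combination -hx))

end IsVonNeumannRegular

open IsVonNeumannRegular

theorem natCard_isVonNeumannRegular_congr {M N : Type*} [Monoid M] [Monoid N] (e : M ≃* N) :
    Nat.card {a : M // IsVonNeumannRegular a} = Nat.card {b : N // IsVonNeumannRegular b} :=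
  Nat.card_congr (e.toEquiv.subtypeEquiv fun _ => (map_iff e).symm)

theorem natCard_isVonNeumannRegular_prod {M N : Type*} [Monoid M] [Monoid N] :
    Nat.card {a : M × N // IsVonNeumannRegular a} =
      Nat.card {a : M // IsVonNeumannRegular a} * Nat.card {b : N // IsVonNeumannRegular b} := by
  rw [← Nat.card_prod]
  exact Nat.card_congr ((Equiv.subtypeEquivRight fun _ => prod_iff).trans
    (Equiv.subtypeProdEquivProd))

theorem natCard_isVonNeumannRegular_of_isLocalRing (R : Type*) [CommRing R] [IsLocalRing R]
    [Finite R] : Nat.card {a : R // IsVonNeumannRegular a} = Nat.card Rˣ + 1 := by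
  have hset : {a : R | IsVonNeumannRegular a} = insert 0 (Set.range (Units.val : Rˣ → R)) := by
    ext a
    simp [iff_eq_zero_or_isUnit, IsUnit]
  rw [← Set.coe_ofPred, Nat.card_coe_set_eq, hset, Set.ncard_insert_of_notMem,
    ← Nat.card_coe_set_eq, Nat.card_range_of_injective Units.val_injective]
  rintro ⟨u, hu⟩
  exact u.ne_zero hu

theorem ZMod.isLocalRing_prime_pow {p ν : ℕ} (hp : p.Prime) (hν : ν ≠ 0) :
    IsLocalRing (ZMod (p ^ ν)) := by
  have : Nontrivial (ZMod (p ^ ν)) :=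
    ZMod.nontrivial_iff.mpr (Nat.one_lt_pow hν hp.one_lt).ne'
  have : NeZero (p ^ ν) := ⟨pow_ne_zero _ hp.ne_zero⟩
  refine IsLocalRing.of_isUnit_or_isUnit_one_sub_self fun a => ?_
  by_cases hpa : p ∣ a.val
  · -- `a = p * w` satisfies `a ^ ν = 0`
    obtain ⟨w, hw⟩ := hpa
    refine Or.inr (IsNilpotent.isUnit_one_sub ⟨ν, ?_⟩)
    rw [← ZMod.natCast_zmod_val a, hw, Nat.cast_mul, mul_pow, ← Nat.cast_pow, ZMod.natCast_self,
      zero_mul]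
  · refine Or.inl ?_
    rw [← ZMod.natCast_zmod_val a, ZMod.isUnit_iff_coprime, Nat.coprime_pow_right_iff
      (Nat.pos_of_ne_zero hν), Nat.coprime_comm, hp.coprime_iff_not_dvd]
    exact hpa

theorem isRegularMod_natCast_iff (n : ℕ) (a : ℤ) :
    IsRegularMod n a ↔ IsVonNeumannRegular (a : ZMod n) := by
  simp only [IsRegularMod, IsVonNeumannRegular, ← ZMod.intCast_eq_intCast_iff,
    ZMod.intCast_surjective.exists, Int.cast_mul, Int.cast_pow]

theorem rho_eq_natCard (n : ℕ) [NeZero n] :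
    rho n = Nat.card {b : ZMod n // IsVonNeumannRegular b} := by
  classical
  have hper : Function.Periodic (fun a : ℕ => IsRegularMod n a) n := fun a => by
    simp [isRegularMod_natCast_iff]
  rw [rho, ← Finset.Ico_add_one_right_eq_Icc, add_comm,
    Nat.filter_Ico_card_eq_of_periodic _ _ _ hper, Nat.count_eq_card_filter_range,
    Nat.card_eq_fintype_card, Fintype.card_subtype]
  refine Finset.card_nbij' Nat.cast ZMod.val ?_ ?_ ?_ ?_
  · intro a ha
    simp_all [isRegularMod_natCast_iff]
  · intro b hb
    simpa [isRegularMod_natCast_iff, ZMod.val_lt] using hb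
  · intro a ha
    exact ZMod.val_cast_of_lt (Finset.mem_range.mp (Finset.mem_filter.mp ha).1)
  · intro b _
    exact ZMod.natCast_zmod_val b

theorem rho_one : rho 1 = 1 := by
  rw [rho_eq_natCard, Nat.card_of_subsingleton (⟨0, zero⟩ : {b : ZMod 1 // _})]

theorem rho_mul {m n : ℕ} (hmn : m.Coprime n) : rho (m * n) = rho m * rho n := by
  rcases Nat.eq_zero_or_pos m with rfl | hm
  · simp [(Nat.coprime_zero_left n).mp hmn, rho_one]
  rcases Nat.eq_zero_or_pos n with rfl | hn
  · simp [(Nat.coprime_zero_right m).mp hmn, rho_one]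
  have : NeZero m := ⟨hm.ne'⟩
  have : NeZero n := ⟨hn.ne'⟩
  rw [rho_eq_natCard, rho_eq_natCard, rho_eq_natCard,
    natCard_isVonNeumannRegular_congr (ZMod.chineseRemainder hmn).toMulEquiv,
    natCard_isVonNeumannRegular_prod]

theorem rho_prime_pow {p ν : ℕ} (hp : p.Prime) (hν : ν ≠ 0) :
    rho (p ^ ν) = Nat.totient (p ^ ν) + 1 := by
  have : NeZero (p ^ ν) := ⟨pow_ne_zero _ hp.ne_zero⟩
  have := ZMod.isLocalRing_prime_pow hp hν
  rw [rho_eq_natCard, natCard_isVonNeumannRegular_of_isLocalRing, Nat.card_eq_fintype_card,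
    ZMod.card_units_eq_totient]

theorem Nat.totient_prime_pow_eq_sub {p ν : ℕ} (hp : p.Prime) (hν : ν ≠ 0) :
    Nat.totient (p ^ ν) = p ^ ν - p ^ (ν - 1) := by
  obtain ⟨k, rfl⟩ := Nat.exists_eq_succ_of_ne_zero hν
  rw [Nat.totient_prime_pow_succ hp, Nat.mul_sub_one, pow_succ, Nat.succ_sub_one]

theorem rho_multiplicative_and_prime_pow :
    (rho 1 = 1 ∧ ∀ m n : ℕ, Nat.Coprime m n → rho (m * n) = rho m * rho n) ∧
    ∀ p ν : ℕ, p.Prime → 1 ≤ ν →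
      rho (p ^ ν) = p ^ ν - p ^ (ν - 1) + 1 ∧
      rho (p ^ ν) = Nat.totient (p ^ ν) + 1 := by
  refine ⟨⟨rho_one, fun _ _ => rho_mul⟩, fun p ν hp hν => ?_⟩
  have hν₀ : ν ≠ 0 := Nat.one_le_iff_ne_zero.mp hν
  refine ⟨?_, rho_prime_pow hp hν₀⟩
  rw [rho_prime_pow hp hν₀, Nat.totient_prime_pow_eq_sub hp hν₀]
end

section
/- For every integer n ≥ 1, ϱ(n) = ∑_{d || n} φ(d), where the sum is over the unitary divisors d of n. -/
/-!
`a` is regular (mod `n`) iff the linear congruence `a² x ≡ a` is solvable, i.e. iff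
`gcd(a², n) ∣ a`. Writing `g = gcd(a, n)`, `a = g a'`, `n = g m` with `a'` coprime to `m`,
one gets `gcd(a², n) = g · gcd(g, m)`, so `a` is regular iff `g` is a unitary divisor of `n`.
Since exactly `φ(n / d)` residues `a` have `gcd(a, n) = d`, this gives
`ϱ(n) = ∑_{d ‖ n} φ(n / d)`, and `d ↦ n / d` permutes the unitary divisors.
-/

open Finset

namespace Nat

def unitaryDivisors (n : ℕ) : Finset ℕ := {d ∈ n.divisors | d.Coprime (n / d)}

theorem mem_unitaryDivisors {n d : ℕ} :
    d ∈ n.unitaryDivisors ↔ (d ∣ n ∧ n ≠ 0) ∧ d.Coprime (n / d) := by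
  rw [unitaryDivisors, mem_filter, mem_divisors]

theorem div_mem_unitaryDivisors {n d : ℕ} (hd : d ∈ n.unitaryDivisors) :
    n / d ∈ n.unitaryDivisors := by
  obtain ⟨⟨hdn, hn⟩, hcop⟩ := mem_unitaryDivisors.mp hd
  refine mem_unitaryDivisors.mpr ⟨⟨div_dvd_of_dvd hdn, hn⟩, ?_⟩
  rwa [Nat.div_div_self hdn hn, coprime_comm]

theorem sum_unitaryDivisors_div {M : Type*} [AddCommMonoid M] (n : ℕ) (f : ℕ → M) :
    ∑ d ∈ n.unitaryDivisors, f (n / d) = ∑ d ∈ n.unitaryDivisors, f d := by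
  have div_div {d} (hd : d ∈ n.unitaryDivisors) : n / (n / d) = d :=
    Nat.div_div_self (mem_unitaryDivisors.mp hd).1.1 (mem_unitaryDivisors.mp hd).1.2
  exact sum_nbij' (n / ·) (n / ·) (fun _ ↦ div_mem_unitaryDivisors)
    (fun _ ↦ div_mem_unitaryDivisors) (fun _ ↦ div_div) (fun _ ↦ div_div) (fun _ _ ↦ rfl)

theorem gcd_sq_dvd_iff_coprime_gcd_div_gcd {a n : ℕ} (ha : a ≠ 0) :
    (a ^ 2).gcd n ∣ a ↔ (a.gcd n).Coprime (n / a.gcd n) := by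
  set g := a.gcd n
  have hg : 0 < g := gcd_pos_of_pos_left n (pos_of_ne_zero ha)
  set a' := a / g
  set m := n / g
  have ha' : a = g * a' := (Nat.mul_div_cancel' (gcd_dvd_left a n)).symm
  have hm : n = g * m := (Nat.mul_div_cancel' (gcd_dvd_right a n)).symm
  have hcop : a'.Coprime m := coprime_div_gcd_div_gcd hg
  have gcd_sq : (a ^ 2).gcd n = g * g.gcd m := by
    rw [ha', hm, mul_pow, sq g, mul_assoc, gcd_mul_left,
      Coprime.gcd_mul_right_cancel g (hcop.pow_left 2)]
  rw [gcd_sq, ha', Nat.mul_dvd_mul_iff_left hg]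
  -- `gcd(g, m)` divides both `a'` and `m`, which are coprime
  exact ⟨fun h ↦ eq_one_of_dvd_one (hcop ▸ dvd_gcd h (gcd_dvd_right g m)),
    fun h ↦ h ▸ one_dvd a'⟩

theorem card_filter_range_gcd_eq_sum_totient (n : ℕ) (p : ℕ → Prop) [DecidablePred p] :
    #{a ∈ range n | p (a.gcd n)} = ∑ d ∈ n.divisors with p d, φ (n / d) := by
  rw [card_eq_sum_card_fiberwise (f := (·.gcd n)) (t := {d ∈ n.divisors | p d})]
  · refine sum_congr rfl fun d hd ↦ ?_
    rw [totient_div_of_dvd (dvd_of_mem_divisors (mem_filter.mp hd).1), filter_filter]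
    refine congrArg card (filter_congr fun a _ ↦ ?_)
    rw [gcd_comm n a]
    exact ⟨And.right, fun h ↦ ⟨h ▸ (mem_filter.mp hd).2, h⟩⟩
  · intro a ha
    simp only [coe_filter, mem_range, Set.mem_ofPred_eq, mem_divisors] at ha ⊢
    exact ⟨⟨gcd_dvd_right a n, by omega⟩, ha.2⟩

theorem card_filter_Icc_one_eq_card_filter_range {n : ℕ} {p : ℕ → Prop} [DecidablePred p]
    (h : p n ↔ p 0) : #{a ∈ Icc 1 n | p a} = #{a ∈ range n | p a} := by
  rcases n.eq_zero_or_pos with rfl | hn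
  · rfl
  rw [← zero_add 1, Icc_add_one_left_eq_Ioc, ← Ioo_insert_right hn, range_eq_Ico,
    ← Ioo_insert_left hn, filter_insert, filter_insert]
  by_cases hp : p 0 <;> simp [hp, h]

end Nat

theorem isRegularMod_iff_gcd_sq_dvd (n a : ℤ) : IsRegularMod n a ↔ gcd (a ^ 2) n ∣ a := by
  rw [gcd_dvd_iff_exists]
  simp only [IsRegularMod, Int.modEq_iff_dvd, dvd_def, sub_eq_iff_eq_add']

theorem isRegularMod_natCast_iff_s7 {n a : ℕ} (ha : a ≠ 0) :
    IsRegularMod n a ↔ (a.gcd n).Coprime (n / a.gcd n) := by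
  rw [isRegularMod_iff_gcd_sq_dvd, ← Int.coe_gcd, ← Int.natCast_pow, Int.gcd_natCast_natCast,
    Int.natCast_dvd_natCast]
  exact Nat.gcd_sq_dvd_iff_coprime_gcd_div_gcd ha

theorem rho_eq_sum_totient_unitary_general (n : ℕ) :
    rho n = ∑ d ∈ n.divisors.filter (fun d => Nat.gcd d (n / d) = 1), Nat.totient d := by
  calc rho n = #{a ∈ Icc 1 n | (a.gcd n).Coprime (n / a.gcd n)} := by
        classical
        rw [rho]
        exact congrArg card <| filter_congr fun a ha ↦
          isRegularMod_natCast_iff_s7 (Nat.one_le_iff_ne_zero.mp (mem_Icc.mp ha).1)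
    _ = #{a ∈ range n | (a.gcd n).Coprime (n / a.gcd n)} :=
        Nat.card_filter_Icc_one_eq_card_filter_range (by simp)
    _ = ∑ d ∈ n.unitaryDivisors, Nat.totient (n / d) :=
        Nat.card_filter_range_gcd_eq_sum_totient n fun g ↦ g.Coprime (n / g)
    _ = _ := Nat.sum_unitaryDivisors_div n Nat.totient

theorem rho_eq_sum_totient_unitary (n : ℕ) (hn : 1 ≤ n) :
    rho n = ∑ d ∈ n.divisors.filter (fun d => Nat.gcd d (n / d) = 1), Nat.totient d :=
  rho_eq_sum_totient_unitary_general n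
end

section
/- For every integer n ≥ 1, the sum S(n) of all integers a with 1 ≤ a ≤ n that are regular (mod n) equals n(ϱ(n) + 1)/2. -/
/-!
Adjoin `0` to the regular residues in `[1, n]`: the resulting set of regular `a ∈ [0, n]` is
stable under `a ↦ n - a`, since regularity only depends on `a` up to sign mod `n`. Pairing `a`
with `n - a` shows that its sum is half of `n` times its size, which is `ϱ(n) + 1`, while the
adjoined `0` does not change the sum.
-/

theorem Finset.two_mul_sum_eq_card_mul_of_sub_mem {s : Finset ℕ} {n : ℕ}
    (hle : ∀ a ∈ s, a ≤ n) (hsub : ∀ a ∈ s, n - a ∈ s) :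
    2 * ∑ a ∈ s, a = s.card * n := by
  have hreflect : ∑ a ∈ s, a = ∑ a ∈ s, (n - a) :=
    Finset.sum_nbij' (n - ·) (n - ·) hsub hsub
      (fun a ha => by have := hle a ha; omega) (fun a ha => by have := hle a ha; omega)
      (fun a ha => by have := hle a ha; omega)
  calc 2 * ∑ a ∈ s, a = ∑ a ∈ s, (a + (n - a)) := by
        rw [two_mul, Finset.sum_add_distrib, ← hreflect]
    _ = ∑ _a ∈ s, n := Finset.sum_congr rfl fun a ha => by have := hle a ha; omega
    _ = s.card * n := by rw [Finset.sum_const, smul_eq_mul]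

section IsRegularMod

variable {n a b : ℤ}

theorem isRegularMod_zero (n : ℤ) : IsRegularMod n 0 := ⟨0, by simp [Int.ModEq.refl]⟩

theorem IsRegularMod.of_modEq (h : IsRegularMod n a) (hab : a ≡ b [ZMOD n]) :
    IsRegularMod n b := by
  obtain ⟨x, hx⟩ := h
  exact ⟨x, (((hab.pow 2).mul_right x).symm.trans hx).trans hab⟩

theorem IsRegularMod.neg (h : IsRegularMod n a) : IsRegularMod n (-a) := by
  obtain ⟨x, hx⟩ := h
  exact ⟨-x, by simpa only [neg_sq, mul_neg] using hx.neg⟩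

theorem IsRegularMod.self_sub (h : IsRegularMod n a) : IsRegularMod n (n - a) :=
  h.neg.of_modEq (by simp [Int.ModEq])

end IsRegularMod

open Classical in
theorem sum_regular_eq_general (n : ℕ) :
    ((∑ a ∈ (Finset.Icc 1 n).filter fun a : ℕ =>
        IsRegularMod (n : ℤ) (a : ℤ), a : ℕ) : ℚ) = n * (rho n + 1) / 2 := by
  set F := (Finset.Icc 1 n).filter fun a : ℕ => IsRegularMod (n : ℤ) (a : ℤ)
  set R := (Finset.Icc 0 n).filter fun a : ℕ => IsRegularMod (n : ℤ) (a : ℤ) with hRdef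
  have hsum : 2 * ∑ a ∈ R, a = R.card * n := by
    refine Finset.two_mul_sum_eq_card_mul_of_sub_mem
      (fun a ha => (Finset.mem_Icc.1 (Finset.mem_filter.1 ha).1).2) ?_
    intro a ha
    obtain ⟨hIcc, hreg⟩ := Finset.mem_filter.1 ha
    refine Finset.mem_filter.2 ⟨Finset.mem_Icc.2 ⟨Nat.zero_le _, n.sub_le a⟩, ?_⟩
    rw [Nat.cast_sub (Finset.mem_Icc.1 hIcc).2]
    exact hreg.self_sub
  have hR : R = insert 0 F := by
    rw [hRdef, ← Finset.insert_Icc_add_one_left_eq_Icc n.zero_le, Finset.filter_insert,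
      if_pos (by exact_mod_cast isRegularMod_zero n), zero_add]
  have h0F : 0 ∉ F := by simp [F]
  rw [hR, Finset.sum_insert h0F, Finset.card_insert_of_notMem h0F, zero_add] at hsum
  have hsumQ : (2 * ∑ a ∈ F, a : ℚ) = (rho n + 1) * n := by exact_mod_cast hsum
  linarith

open Classical in
theorem sum_regular_eq (n : ℕ) (hn : 1 ≤ n) :
    ((∑ a ∈ (Finset.Icc 1 n).filter fun a : ℕ =>
        IsRegularMod (n : ℤ) (a : ℤ), a : ℕ) : ℚ) = n * (rho n + 1) / 2 :=
  sum_regular_eq_general n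
end

section
/- liminf_{n → ∞} ϱ(n)/φ(n) = 1. -/
/-! Every unit mod `n` is regular, so `φ n ≤ ϱ n ≤ n`. At a prime `p` this squeezes
`ϱ p / φ p` between `1` and `p / (p - 1)`, which tends to `1`. -/

open Filter

lemma IsRegularMod.of_isCoprime {n a : ℤ} (h : IsCoprime a n) : IsRegularMod n a := by
  obtain ⟨u, v, huv⟩ := h
  exact ⟨u, Int.modEq_iff_dvd.2 ⟨a * v, by linear_combination (-a) * huv⟩⟩

lemma rho_le (n : ℕ) : rho n ≤ n := by
  classical
  rw [rho]
  exact (Finset.card_filter_le _ _).trans (by simp)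

lemma totient_le_rho (n : ℕ) : n.totient ≤ rho n := by
  rw [← Nat.filter_coprime_Ico_eq_totient n 1, rho]
  refine Finset.card_le_card fun a ha => ?_
  simp only [Finset.mem_filter, Finset.mem_Ico, Finset.mem_Icc] at ha ⊢
  exact ⟨by omega, .of_isCoprime (Nat.isCoprime_iff_coprime.2 ha.2.symm)⟩

lemma one_le_rho_div_totient {n : ℕ} (hn : 0 < n) : 1 ≤ (rho n : ℝ) / n.totient := by
  rw [one_le_div (by exact_mod_cast Nat.totient_pos.2 hn)]
  exact_mod_cast totient_le_rho n

lemma rho_div_totient_le_of_prime {p : ℕ} (hp : p.Prime) :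
    (rho p : ℝ) / p.totient ≤ p / (p - 1) := by
  have hp1 : (1 : ℝ) < p := by exact_mod_cast hp.one_lt
  rw [Nat.totient_prime hp, Nat.cast_sub hp.one_le, Nat.cast_one]
  gcongr
  exact_mod_cast rho_le p

lemma frequently_rho_div_totient_le {ε : ℝ} (hε : 0 < ε) :
    ∃ᶠ n in atTop, (rho n : ℝ) / n.totient ≤ 1 + ε := by
  have hprime : ∃ᶠ n : ℕ in atTop, n.Prime :=
    Nat.frequently_atTop_iff_infinite.2 Nat.infinite_setOfPred_prime
  have hclose : ∀ᶠ n : ℕ in atTop, (n : ℝ) / (n - 1) < 1 + ε := by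
    simpa only [← sub_eq_add_neg] using
      (tendsto_natCast_div_add_atTop (-1 : ℝ)).eventually (gt_mem_nhds (by linarith))
  exact (hprime.and_eventually hclose).mono fun p ⟨hp, hlt⟩ =>
    (rho_div_totient_le_of_prime hp).trans hlt.le

theorem liminf_rho_div_totient :
    Filter.liminf (fun n : ℕ => (rho n : ℝ) / (Nat.totient n : ℝ)) Filter.atTop = 1 := by
  have hge : ∀ᶠ n in atTop, 1 ≤ (rho n : ℝ) / n.totient :=
    (eventually_gt_atTop 0).mono fun _ => one_le_rho_div_totient
  refine le_antisymm (le_of_forall_pos_le_add fun ε hε => ?_) ?_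
  · exact liminf_le_of_frequently_le (frequently_rho_div_totient_le hε)
      (isBoundedUnder_of_eventually_ge hge)
  · exact le_liminf_of_le (.of_frequently_le (frequently_rho_div_totient_le one_pos)) hge
end
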